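/- For all real B ≥ 0 and vectors r, s ∈ ℝ³ with B pointing in the e₃ direction (i.e. 𝐁 = B·e₃), |exp(i(1/4)𝐁·(r∧s)) − 1| ≤ (B/4)·|r|^{1/2}·|r−s|·|s|^{1/2}. -/

import Mathlib

open scoped RealInnerProductSpace

/-- The cross product on `EuclideanSpace ℝ (Fin 3)`. -/
noncomputable def cross3 (r s : EuclideanSpace ℝ (Fin 3)) : EuclideanSpace ℝ (Fin 3) :=
  (WithLp.equiv 2 (Fin 3 → ℝ)).symm
    ![r 1 * s 2 - r 2 * s 1, r 2 * s 0 - r 0 * s 2, r 0 * s 1 - r 1 * s 0]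

/-!
Since `|e^{iθ} - 1| ≤ |θ|` and `|𝐁·(r∧s)| ≤ B |r∧s|`, it suffices to bound `|r∧s|`.
Because `r∧s = r∧(s-r) = (r-s)∧s` and `|u∧v| ≤ |u||v|` (Lagrange's identity), `|r∧s|` is at
most both `|r||r-s|` and `|r-s||s|`, hence at most their geometric mean.
-/

open Matrix

lemma cross3_eq_toLp_crossProduct (r s : EuclideanSpace ℝ (Fin 3)) :
    cross3 r s = WithLp.toLp 2 (r.ofLp ⨯₃ s.ofLp) := rfl

lemma cross3_sub_self_right (r s : EuclideanSpace ℝ (Fin 3)) :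
    cross3 r (s - r) = cross3 r s := by
  simp [cross3_eq_toLp_crossProduct, cross_self]

lemma cross3_sub_self_left (r s : EuclideanSpace ℝ (Fin 3)) :
    cross3 (r - s) s = cross3 r s := by
  simp [cross3_eq_toLp_crossProduct, cross_self]

lemma norm_cross3_sq_add_inner_sq (r s : EuclideanSpace ℝ (Fin 3)) :
    ‖cross3 r s‖ ^ 2 + ⟪r, s⟫ ^ 2 = ‖r‖ ^ 2 * ‖s‖ ^ 2 := by
  simp only [EuclideanSpace.real_norm_sq_eq, cross3_eq_toLp_crossProduct, Fin.sum_univ_three,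
    cross_apply, PiLp.inner_apply, RCLike.inner_apply, conj_trivial, Fin.isValue, cons_val_zero,
    cons_val_one, cons_val]
  ring

lemma norm_cross3_le (r s : EuclideanSpace ℝ (Fin 3)) : ‖cross3 r s‖ ≤ ‖r‖ * ‖s‖ := by
  refine (pow_le_pow_iff_left₀ (norm_nonneg _) (by positivity) two_ne_zero).1 ?_
  nlinarith [norm_cross3_sq_add_inner_sq r s, sq_nonneg ⟪r, s⟫]

lemma norm_cross3_le_sqrt_mul_norm_sub_mul_sqrt (r s : EuclideanSpace ℝ (Fin 3)) :
    ‖cross3 r s‖ ≤ √‖r‖ * ‖r - s‖ * √‖s‖ := by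
  have hr : ‖cross3 r s‖ ≤ ‖r‖ * ‖r - s‖ := by
    simpa [← cross3_sub_self_right r s, norm_sub_rev] using norm_cross3_le r (s - r)
  have hs : ‖cross3 r s‖ ≤ ‖r - s‖ * ‖s‖ := by
    simpa [← cross3_sub_self_left r s] using norm_cross3_le (r - s) s
  refine (pow_le_pow_iff_left₀ (norm_nonneg _) (by positivity) two_ne_zero).1 ?_
  calc ‖cross3 r s‖ ^ 2 = ‖cross3 r s‖ * ‖cross3 r s‖ := sq _
    _ ≤ (‖r‖ * ‖r - s‖) * (‖r - s‖ * ‖s‖) := mul_le_mul hr hs (norm_nonneg _) (by positivity)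
    _ = (√‖r‖ * ‖r - s‖ * √‖s‖) ^ 2 := by
        rw [mul_pow, mul_pow, Real.sq_sqrt (norm_nonneg _), Real.sq_sqrt (norm_nonneg _)]; ring

theorem magnetic_phase_bound (B : ℝ) (hB : 0 ≤ B) (r s : EuclideanSpace ℝ (Fin 3)) :
    ‖(Complex.exp (Complex.I *
            ((1 / 4) * ⟪B • EuclideanSpace.single (2 : Fin 3) (1 : ℝ), cross3 r s⟫)) - 1)‖
      ≤ (B / 4) * Real.sqrt ‖r‖ * ‖r - s‖ * Real.sqrt ‖s‖ := by
  set b := B • EuclideanSpace.single (2 : Fin 3) (1 : ℝ)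
  have hb : ‖b‖ = B := by simp [b, norm_smul, abs_of_nonneg hB]
  calc _ ≤ ‖(1 / 4) * ⟪b, cross3 r s⟫‖ := by
        simpa using Real.norm_exp_I_mul_ofReal_sub_one_le (x := 1 / 4 * ⟪b, cross3 r s⟫)
    _ ≤ 1 / 4 * (‖b‖ * ‖cross3 r s‖) := by
        rw [norm_mul, Real.norm_eq_abs, Real.norm_eq_abs, abs_of_pos (by norm_num)]
        gcongr
        exact abs_real_inner_le_norm b _
    _ ≤ 1 / 4 * (B * (√‖r‖ * ‖r - s‖ * √‖s‖)) := by
        rw [hb]; gcongr; exact norm_cross3_le_sqrt_mul_norm_sub_mul_sqrt r s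
    _ = _ := by ring
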